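/- Derivative of the Gallager-type exponent at zero: For the function E(ρ, λ) = −log₂( Σ_{a_i∈𝒳} Σ_{b∈𝒴} P^γ(a_i) P_{Y|X}(b|a_i)^{1/(1+ρ)} ( Σ_{a_j∈𝒳} P^λ(a_j|a_i) P_{Y|X}(b|a_j)^{1/(1+ρ)} )^ρ ), one has E(0, λ) = 0 and ∂E(ρ, λ)/∂ρ evaluated at ρ = 0 equals the Kullback–Leibler divergence D(P^γ_{XiY} ‖ Q^λ_{XiY}). -/

import Mathlib

/-! At `ρ = 0` the inner exponent `1/(1+ρ)` is `1` and the outer one is `0`, so the argument of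
the logarithm is `Σ P^γ(a) W(b|a) = 1`. Term by term, `d/dρ x^{1/(1+ρ)} = -x log x` and
`d/dρ g(ρ)^ρ = log g(0)` at `ρ = 0`, where `g(0) = Q^λ(a,b) / P^γ(a)`; hence the argument has
derivative `-Σ P^γ log (P^γ / Q^λ)` and `-log₂` turns this into the divergence. -/

open Finset

noncomputable section

/-- Kullback–Leibler divergence (base 2). -/
def KL2 {α : Type*} [Fintype α] (p q : α → ℝ) : ℝ :=
  ∑ a, p a * Real.logb 2 (p a / q a)

variable {𝒳 𝒴 : Type*} [Fintype 𝒳] [Fintype 𝒴]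

/-- First marginal `P^γ` of the joint law `P^λ` on `𝒳 × 𝒳`. -/
def Pg (Plam : 𝒳 → 𝒳 → ℝ) (a : 𝒳) : ℝ := ∑ b : 𝒳, Plam a b

/-- The Gallager-type exponent
`E(ρ, λ) = −log₂( Σ_{a_i} Σ_b P^γ(a_i) P(b|a_i)^{1/(1+ρ)}
  (Σ_{a_j} P^λ(a_j|a_i) P(b|a_j)^{1/(1+ρ)})^ρ )`. -/
def Egal (W : 𝒳 → 𝒴 → ℝ) (Plam : 𝒳 → 𝒳 → ℝ) (ρ : ℝ) : ℝ :=
  - Real.logb 2 (∑ ai : 𝒳, ∑ b : 𝒴,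
      Pg Plam ai * W ai b ^ (1 / (1 + ρ)) *
        (∑ aj : 𝒳, Plam ai aj / Pg Plam ai * W aj b ^ (1 / (1 + ρ))) ^ ρ)

/-- `P^γ_{XiY}(x, y) = P^γ(x) P_{Y|X}(y|x)`. -/
def PXY (W : 𝒳 → 𝒴 → ℝ) (Plam : 𝒳 → 𝒳 → ℝ) : 𝒳 × 𝒴 → ℝ :=
  fun p => Pg Plam p.1 * W p.1 p.2

/-- `Q^λ_{XiY}(x, y) = Σ_a P^λ(x, a) P_{Y|X}(y|a)`. -/
def QXY (W : 𝒳 → 𝒴 → ℝ) (Plam : 𝒳 → 𝒳 → ℝ) : 𝒳 × 𝒴 → ℝ :=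
  fun p => ∑ a : 𝒳, Plam p.1 a * W a p.2

lemma hasDerivAt_rpow_one_div_one_add_zero {x : ℝ} (hx : 0 < x) :
    HasDerivAt (fun ρ : ℝ => x ^ (1 / (1 + ρ))) (-(x * Real.log x)) 0 := by
  have hs : HasDerivAt (fun ρ : ℝ => 1 / (1 + ρ)) (-1) 0 := by
    simpa using ((hasDerivAt_id (0 : ℝ)).const_add 1).fun_inv (by norm_num)
  simpa [mul_comm] using hs.const_rpow hx

/-- At `ρ = 0` the base of `g ρ ^ ρ` does not matter to first order, since `g ρ ^ 0 = 1`. -/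
lemma HasDerivAt.rpow_self_at_zero {g : ℝ → ℝ} {g' : ℝ} (hg : HasDerivAt g g' 0)
    (h0 : 0 < g 0) : HasDerivAt (fun ρ => g ρ ^ ρ) (Real.log (g 0)) 0 := by
  simpa using hg.rpow (hasDerivAt_id 0) h0

lemma hasDerivAt_mul_rpow_mul_sum_rpow_rpow {ι : Type*} [Fintype ι] {p x : ℝ} {c y : ι → ℝ}
    (hx : 0 < x) (hy : ∀ j, 0 < y j) (hS : 0 < ∑ j, c j * y j) :
    HasDerivAt
      (fun ρ : ℝ => p * x ^ (1 / (1 + ρ)) * (∑ j, c j * y j ^ (1 / (1 + ρ))) ^ ρ)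
      (p * x * (Real.log (∑ j, c j * y j) - Real.log x)) 0 := by
  have hsum : HasDerivAt (fun ρ : ℝ => ∑ j, c j * y j ^ (1 / (1 + ρ)))
      (∑ j, c j * -(y j * Real.log (y j))) 0 :=
    HasDerivAt.fun_sum fun j _ => (hasDerivAt_rpow_one_div_one_add_zero (hy j)).const_mul (c j)
  have hpow := hsum.rpow_self_at_zero (by simpa using hS)
  refine ((hasDerivAt_rpow_one_div_one_add_zero hx).const_mul p |>.mul hpow).congr_deriv ?_
  simp only [add_zero, div_one, Real.rpow_one, Real.rpow_zero]
  ring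

section Gallager

variable (W : 𝒳 → 𝒴 → ℝ) (Plam : 𝒳 → 𝒳 → ℝ)

def gallagerSum (ρ : ℝ) : ℝ :=
  ∑ ai : 𝒳, ∑ b : 𝒴,
    Pg Plam ai * W ai b ^ (1 / (1 + ρ)) *
      (∑ aj : 𝒳, Plam ai aj / Pg Plam ai * W aj b ^ (1 / (1 + ρ))) ^ ρ

lemma Egal_eq_neg_logb_gallagerSum :
    Egal W Plam = fun ρ => -Real.logb 2 (gallagerSum W Plam ρ) := rfl

variable {W Plam}

lemma Pg_pos (hpos : ∀ a b, 0 < Plam a b) (a : 𝒳) : 0 < Pg Plam a :=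
  Finset.sum_pos (fun b _ => hpos a b) ⟨a, Finset.mem_univ a⟩

omit [Fintype 𝒴] in
lemma QXY_pos (hWpos : ∀ x y, 0 < W x y) (hpos : ∀ a b, 0 < Plam a b) (a : 𝒳) (b : 𝒴) :
    0 < QXY W Plam (a, b) :=
  Finset.sum_pos (fun j _ => mul_pos (hpos a j) (hWpos j b)) ⟨a, Finset.mem_univ a⟩

omit [Fintype 𝒴] in
lemma sum_cond_mul_eq_QXY_div_Pg (a : 𝒳) (b : 𝒴) :
    ∑ j, Plam a j / Pg Plam a * W j b = QXY W Plam (a, b) / Pg Plam a := by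
  rw [QXY, Finset.sum_div]
  exact Finset.sum_congr rfl fun j _ => by ring

lemma gallagerSum_zero (hW1 : ∀ x, ∑ y, W x y = 1)
    (hsum : (∑ a : 𝒳, ∑ b : 𝒳, Plam a b) = 1) : gallagerSum W Plam 0 = 1 := by
  simp only [gallagerSum, add_zero, div_one, Real.rpow_one, Real.rpow_zero, mul_one,
    ← Finset.mul_sum, hW1]
  exact hsum

lemma hasDerivAt_gallagerSum_zero (hWpos : ∀ x y, 0 < W x y) (hpos : ∀ a b, 0 < Plam a b) :
    HasDerivAt (gallagerSum W Plam)
      (-∑ p, PXY W Plam p * Real.log (PXY W Plam p / QXY W Plam p)) 0 := by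
  rw [Fintype.sum_prod_type, ← Finset.sum_neg_distrib]
  refine HasDerivAt.fun_sum fun a _ => ?_
  rw [← Finset.sum_neg_distrib]
  refine HasDerivAt.fun_sum fun b _ => ?_
  have hPg := Pg_pos hpos a
  have hQ := QXY_pos hWpos hpos a b
  have hS : 0 < ∑ j, Plam a j / Pg Plam a * W j b := by
    rw [sum_cond_mul_eq_QXY_div_Pg]
    exact div_pos hQ hPg
  refine (hasDerivAt_mul_rpow_mul_sum_rpow_rpow (p := Pg Plam a) (hWpos a b) (hWpos · b)
    hS).congr_deriv ?_
  rw [sum_cond_mul_eq_QXY_div_Pg, PXY, Real.log_div (mul_pos hPg (hWpos a b)).ne' hQ.ne',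
    Real.log_mul hPg.ne' (hWpos a b).ne', Real.log_div hQ.ne' hPg.ne']
  ring

end Gallager

/-- **Derivative of the Gallager-type exponent at zero**: `E(0, λ) = 0` and
`∂E(ρ, λ)/∂ρ |_{ρ=0} = D(P^γ_{XiY} ‖ Q^λ_{XiY})`. -/
theorem gallager_exponent_deriv_at_zero
    (W : 𝒳 → 𝒴 → ℝ) (hWpos : ∀ x y, 0 < W x y) (hW1 : ∀ x, ∑ y, W x y = 1)
    (Plam : 𝒳 → 𝒳 → ℝ) (hpos : ∀ a b, 0 < Plam a b)
    (hsum : (∑ a : 𝒳, ∑ b : 𝒳, Plam a b) = 1) :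
    Egal W Plam 0 = 0 ∧
      HasDerivAt (Egal W Plam) (KL2 (PXY W Plam) (QXY W Plam)) 0 := by
  have hF0 := gallagerSum_zero hW1 hsum
  rw [Egal_eq_neg_logb_gallagerSum]
  refine ⟨by simp [hF0], ?_⟩
  have hlog := ((hasDerivAt_gallagerSum_zero hWpos hpos).log (by simp [hF0])).div_const
    (Real.log 2)
  refine hlog.neg.congr_deriv ?_
  rw [hF0, div_one, neg_div, neg_neg, KL2, Finset.sum_div]
  simp only [Real.logb, mul_div_assoc]
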